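/- Fix n, k ≤ n, ℓ with ℓ/k ≥ k/n, and tolerance p_tol ∈ (0,1]. If C is a positive integer with C ≤ √(2 p_tol) · exp(k(ℓ/k − k/n)²), then C i.i.d. uniform k-subsets X_1,...,X_C of {1,...,n} satisfy pr(max_{1≤i<j≤C} |X_i ∩ X_j| ≥ ℓ) ≤ p_tol. -/

import Mathlib

/-!
A union bound over the `C.choose 2 ≤ C² / 2` pairs reduces everything to the hypergeometric
tail: for a fixed `k`-set `s`, at most `n.choose k * exp (-2k(ℓ/k - k/n)²)` of the `k`-sets `t`
meet `s` in `ℓ` or more points. This is a Chernoff bound. Expanding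
`(1 + x) ^ #(s ∩ t) = ∑ J ⊆ s ∩ t, x ^ #J` and counting the `k`-sets containing a given `J`
dominates the hypergeometric moment generating function by the binomial one,
`∑ t, (1 + x) ^ #(s ∩ t) ≤ n.choose k * (1 + x k / n) ^ k`; Hoeffding's lemma for a
Bernoulli(`k/n`) variable bounds `1 + (e^λ - 1) k / n` by `exp (λ k / n + λ² / 8)`, and
`λ = 4 (ℓ/k - k/n)` is the optimal choice.
-/

open MeasureTheory ProbabilityTheory Finset Real
open scoped ENNReal

theorem one_sub_add_mul_exp_le {p : ℝ} (hp0 : 0 ≤ p) (hp1 : p ≤ 1) (t : ℝ) :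
    1 - p + p * exp t ≤ exp (p * t + t ^ 2 / 8) := by
  let q : unitInterval := ⟨p, hp0, hp1⟩
  have hsupp : ∀ᵐ x ∂Ber((1 : ℝ), 0, q), x ∈ Set.Icc (0 : ℝ) 1 := by
    rw [ae_iff]
    exact bernoulliMeasure_apply_of_notMem_of_notMem q measurableSet_Icc.compl (by simp) (by simp)
  have hoeffding := (hasSubgaussianMGF_of_mem_Icc measurable_id.aemeasurable hsupp).mgf_le t
  simp only [mgf, integral_bernoulliMeasure, id, smul_eq_mul] at hoeffding
  norm_num at hoeffding
  have h1 : exp (p * t) * exp (t * (1 - p)) = exp t := by rw [← exp_add]; ring_nf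
  have h2 : exp (p * t) * exp (-(t * p)) = 1 := by rw [← exp_add, ← exp_zero]; ring_nf
  calc 1 - p + p * exp t = exp (p * t) * (p * exp (t * (1 - p)) + (1 - p) * exp (-(t * p))) := by
        linear_combination (-p) * h1 - (1 - p) * h2
    _ ≤ exp (p * t) * exp (1 / 4 * t ^ 2 / 2) := by gcongr
    _ = exp (p * t + t ^ 2 / 8) := by rw [← exp_add]; ring_nf

theorem Nat.choose_sub_mul_pow_le {n k j : ℕ} (hk : k ≤ n) (hj : j ≤ k) :
    (n - j).choose (k - j) * n ^ j ≤ n.choose k * k ^ j := by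
  induction j with
  | zero => simp
  | succ j ih =>
    have hstep : (n - j) * (n - (j + 1)).choose (k - (j + 1))
        = (n - j).choose (k - j) * (k - j) := by
      have := Nat.add_one_mul_choose_eq (n - (j + 1)) (k - (j + 1))
      rwa [show n - (j + 1) + 1 = n - j by omega, show k - (j + 1) + 1 = k - j by omega] at this
    have hcross : (k - j) * n ≤ k * (n - j) := by
      rw [Nat.sub_mul, Nat.mul_sub]
      exact Nat.sub_le_sub_left (by rw [mul_comm j]; exact Nat.mul_le_mul_right j hk) _
    refine Nat.le_of_mul_le_mul_left ?_ (show 0 < n - j by omega)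
    calc (n - j) * ((n - (j + 1)).choose (k - (j + 1)) * n ^ (j + 1))
        = (n - j).choose (k - j) * n ^ j * ((k - j) * n) := by
          rw [pow_succ, ← mul_assoc, hstep]; ring
      _ ≤ n.choose k * k ^ j * (k * (n - j)) := Nat.mul_le_mul (ih (by omega)) hcross
      _ = (n - j) * (n.choose k * k ^ (j + 1)) := by ring

theorem Nat.cast_choose_sub_le {n k j : ℕ} (hk : k ≤ n) (hj : j ≤ k) :
    ((n - j).choose (k - j) : ℝ) ≤ (k / n) ^ j * n.choose k := by
  rcases Nat.eq_zero_or_pos n with rfl | hn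
  · obtain rfl : j = 0 := by omega
    simp
  rw [div_pow, div_mul_eq_mul_div, le_div_iff₀ (by positivity)]
  exact_mod_cast (Nat.choose_sub_mul_pow_le hk hj).trans_eq (mul_comm _ _)

section Subsets

variable {α : Type*} [Fintype α] [DecidableEq α]

theorem sum_add_one_pow_card_inter_le {s : Finset α} {k : ℕ} (hs : #s = k)
    (hk : k ≤ Fintype.card α) {x : ℝ} (hx : 0 ≤ x) :
    ∑ t ∈ powersetCard k univ, (x + 1) ^ #(s ∩ t)
      ≤ (Fintype.card α).choose k * (x * (k / Fintype.card α) + 1) ^ k := by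
  set n := Fintype.card α
  have hsupersets : ∀ J ∈ s.powerset,
      #{t ∈ powersetCard k univ | J ⊆ t} = (n - #J).choose (k - #J) := fun J hJ => by
    simpa using card_filter_powersetCard_subset J univ k (subset_univ J)
      (hs ▸ card_le_card (mem_powerset.1 hJ))
  calc ∑ t ∈ powersetCard k univ, (x + 1) ^ #(s ∩ t)
      = ∑ t ∈ powersetCard k univ, ∑ J ∈ (s ∩ t).powerset, x ^ #J := by
        simp [← sum_pow_mul_eq_add_pow]
    _ = ∑ J ∈ s.powerset, ∑ t ∈ {t ∈ powersetCard k univ | J ⊆ t}, x ^ #J :=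
        sum_comm' fun t J => by
          simp only [mem_filter, Finset.mem_powerset, mem_powersetCard, Finset.subset_inter_iff]
          tauto
    _ = ∑ J ∈ s.powerset, x ^ #J * (n - #J).choose (k - #J) := by
        refine sum_congr rfl fun J hJ => ?_
        rw [sum_const, hsupersets J hJ, nsmul_eq_mul, mul_comm]
    _ ≤ ∑ J ∈ s.powerset, x ^ #J * ((k / n) ^ #J * n.choose k) := by
        gcongr with J hJ
        exact Nat.cast_choose_sub_le hk (hs ▸ card_le_card (mem_powerset.1 hJ))
    _ = n.choose k * (x * (k / n) + 1) ^ k := by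
        rw [← hs, ← sum_pow_mul_eq_add_pow, mul_sum]
        refine sum_congr rfl fun J _ => ?_
        rw [one_pow, mul_one, mul_pow]; ring

theorem card_filter_le_card_inter_le {s : Finset α} {k ℓ : ℕ} (hs : #s = k) (hk0 : 0 < k)
    (hk : k ≤ Fintype.card α) (hratio : (k : ℝ) / Fintype.card α ≤ ℓ / k) :
    (#{t ∈ powersetCard k univ | ℓ ≤ #(s ∩ t)} : ℝ)
      ≤ (Fintype.card α).choose k * exp (-2 * k * (ℓ / k - k / Fintype.card α) ^ 2) := by
  set n := Fintype.card α
  set p : ℝ := k / n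
  set d : ℝ := ℓ / k - p
  have hp0 : 0 ≤ p := by positivity
  have hp1 : p ≤ 1 := div_le_one_of_le₀ (by exact_mod_cast hk) (by positivity)
  have hd : 0 ≤ d := sub_nonneg.2 hratio
  set x := exp (4 * d) - 1
  have hx1 : x + 1 = exp (4 * d) := sub_add_cancel _ _
  have hx : 0 ≤ x := sub_nonneg.2 (one_le_exp (by positivity))
  have hmarkov : (#{t ∈ powersetCard k univ | ℓ ≤ #(s ∩ t)} : ℝ) * (x + 1) ^ ℓ
      ≤ ∑ t ∈ powersetCard k univ, (x + 1) ^ #(s ∩ t) := by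
    rw [← nsmul_eq_mul]
    calc _ ≤ ∑ t ∈ powersetCard k univ with ℓ ≤ #(s ∩ t), (x + 1) ^ #(s ∩ t) :=
          card_nsmul_le_sum _ _ _ fun t ht =>
            pow_le_pow_right₀ (by linarith) (mem_filter.1 ht).2
      _ ≤ _ := sum_le_sum_of_subset_of_nonneg (filter_subset _ _) fun _ _ _ => by positivity
  have hmgf : (x * p + 1) ^ k ≤ exp (k * (p * (4 * d) + (4 * d) ^ 2 / 8)) := by
    rw [exp_nat_mul]
    gcongr
    calc x * p + 1 = 1 - p + p * exp (4 * d) := by rw [← hx1]; ring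
      _ ≤ _ := one_sub_add_mul_exp_le hp0 hp1 _
  have hℓ : (ℓ : ℝ) = k * (d + p) := by
    have : (k : ℝ) ≠ 0 := by positivity
    simp only [d]; field_simp; ring
  calc (#{t ∈ powersetCard k univ | ℓ ≤ #(s ∩ t)} : ℝ)
      = #{t ∈ powersetCard k univ | ℓ ≤ #(s ∩ t)} * (x + 1) ^ ℓ * exp (-(ℓ * (4 * d))) := by
        rw [hx1, ← exp_nat_mul, mul_assoc, ← exp_add, add_neg_cancel, exp_zero, mul_one]
    _ ≤ n.choose k * (x * p + 1) ^ k * exp (-(ℓ * (4 * d))) := by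
        gcongr ?_ * _
        exact hmarkov.trans (sum_add_one_pow_card_inter_le hs hk hx)
    _ ≤ n.choose k * exp (k * (p * (4 * d) + (4 * d) ^ 2 / 8)) * exp (-(ℓ * (4 * d))) := by
        gcongr
    _ = n.choose k * exp (-2 * k * d ^ 2) := by
        rw [mul_assoc, ← exp_add, hℓ]; ring_nf

end Subsets

section UnionBound

variable {Ω ι : Type*} [MeasurableSpace Ω] [Fintype ι] [LinearOrder ι]

theorem measureReal_exists_lt_le (μ : Measure Ω) [IsFiniteMeasure μ] (E : ι → ι → Set Ω)
    {q : ℝ} (hE : ∀ i j, i < j → μ.real (E i j) ≤ q) :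
    μ.real {ω | ∃ i j, i < j ∧ ω ∈ E i j} ≤ (Fintype.card ι).choose 2 * q := by
  have hcover : {ω | ∃ i j, i < j ∧ ω ∈ E i j} ⊆ ⋃ x ∈ ({x : ι × ι | x.1 < x.2} : Finset _),
      E x.1 x.2 := by
    rintro ω ⟨i, j, hij, hω⟩
    exact Set.mem_biUnion (x := (i, j)) (by simpa using hij) hω
  calc _ ≤ μ.real (⋃ x ∈ ({x : ι × ι | x.1 < x.2} : Finset _), E x.1 x.2) :=
        measureReal_mono hcover (measure_ne_top _ _)
    _ ≤ ∑ x : ι × ι with x.1 < x.2, μ.real (E x.1 x.2) := measureReal_biUnion_finset_le _ _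
    _ ≤ ∑ x : ι × ι with x.1 < x.2, q := sum_le_sum fun x hx => hE _ _ (mem_filter.1 hx).2
    _ = _ := by rw [sum_const, nsmul_eq_mul, Fintype.card_product_filter_lt]

end UnionBound

section RandomSubsets

variable {Ω α : Type*} [MeasurableSpace Ω] [Fintype α] [DecidableEq α]

theorem measureReal_le_card_inter_le (μ : Measure Ω) [IsFiniteMeasure μ] {Y Z : Ω → Finset α}
    {k ℓ : ℕ} (hY : ∀ ω, #(Y ω) = k) (hZ : ∀ ω, #(Z ω) = k)
    (hjoint : ∀ s t, #s = k → #t = k →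
      μ.real ({ω | Y ω = s} ∩ {ω | Z ω = t}) ≤ ((Fintype.card α).choose k : ℝ)⁻¹ ^ 2)
    (hk0 : 0 < k) (hk : k ≤ Fintype.card α) (hratio : (k : ℝ) / Fintype.card α ≤ ℓ / k) :
    μ.real {ω | ℓ ≤ #(Y ω ∩ Z ω)} ≤ exp (-2 * k * (ℓ / k - k / Fintype.card α) ^ 2) := by
  set N : ℝ := ((Fintype.card α).choose k : ℝ)
  set P := powersetCard k (univ : Finset α)
  set bound := exp (-2 * k * (ℓ / k - k / Fintype.card α) ^ 2)
  have hN : N ≠ 0 := by simp only [N]; exact_mod_cast (Nat.choose_pos hk).ne'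
  have hcover : {ω | ℓ ≤ #(Y ω ∩ Z ω)}
      ⊆ ⋃ s ∈ P, ⋃ t ∈ {t ∈ P | ℓ ≤ #(s ∩ t)}, {ω | Y ω = s} ∩ {ω | Z ω = t} := by
    intro ω hω
    have hYP : Y ω ∈ P := mem_powersetCard.2 ⟨subset_univ _, hY ω⟩
    have hZP : Z ω ∈ P := mem_powersetCard.2 ⟨subset_univ _, hZ ω⟩
    exact Set.mem_biUnion hYP (Set.mem_biUnion (mem_filter.2 ⟨hZP, hω⟩) ⟨rfl, rfl⟩)
  calc μ.real {ω | ℓ ≤ #(Y ω ∩ Z ω)}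
      ≤ μ.real (⋃ s ∈ P, ⋃ t ∈ {t ∈ P | ℓ ≤ #(s ∩ t)}, {ω | Y ω = s} ∩ {ω | Z ω = t}) :=
        measureReal_mono hcover (measure_ne_top _ _)
    _ ≤ ∑ s ∈ P, ∑ t ∈ {t ∈ P | ℓ ≤ #(s ∩ t)}, μ.real ({ω | Y ω = s} ∩ {ω | Z ω = t}) :=
        (measureReal_biUnion_finset_le _ _).trans (sum_le_sum fun _ _ =>
          measureReal_biUnion_finset_le _ _)
    _ ≤ ∑ s ∈ P, #{t ∈ P | ℓ ≤ #(s ∩ t)} * N⁻¹ ^ 2 := by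
        gcongr with s hs
        rw [← nsmul_eq_mul, ← sum_const]
        gcongr with t ht
        exact hjoint s t (mem_powersetCard.1 hs).2 (mem_powersetCard.1 (mem_filter.1 ht).1).2
    _ ≤ ∑ s ∈ P, N * bound * N⁻¹ ^ 2 := by
        gcongr with s hs
        exact card_filter_le_card_inter_le (mem_powersetCard.1 hs).2 hk0 hk hratio
    _ = bound := by
        rw [sum_const, card_powersetCard, card_univ, nsmul_eq_mul]
        change N * (N * bound * N⁻¹ ^ 2) = bound
        field_simp

end RandomSubsets

theorem measureReal_inter_eq_inv_choose_sq {Ω : Type*} [MeasureSpace Ω] {n k C : ℕ}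
    {X : Fin C → Ω → Finset (Fin n)}
    (hunif : ∀ i (s : Finset (Fin n)), #s = k → ℙ {ω | X i ω = s} = ((n.choose k : ℝ≥0∞))⁻¹)
    (hindep : ∀ (I : Finset (Fin C)) (s : Fin C → Finset (Fin n)),
      ℙ (⋂ i ∈ I, {ω | X i ω = s i}) = ∏ i ∈ I, ℙ {ω | X i ω = s i})
    {i j : Fin C} (hij : i ≠ j) {s t : Finset (Fin n)} (hs : #s = k) (ht : #t = k) :
    (ℙ : Measure Ω).real ({ω | X i ω = s} ∩ {ω | X j ω = t}) = ((n.choose k : ℝ))⁻¹ ^ 2 := by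
  have h := hindep {i, j} (Function.update (fun _ => t) i s)
  rw [set_biInter_insert, set_biInter_singleton, prod_pair hij] at h
  simp only [Function.update_self, Function.update_of_ne hij.symm] at h
  rw [measureReal_def, h, hunif i s hs, hunif j t ht, ENNReal.toReal_mul, ENNReal.toReal_inv,
    ENNReal.toReal_natCast, sq]

theorem stmt11_general {Ω : Type*} [MeasureSpace Ω] [IsProbabilityMeasure (ℙ : Measure Ω)]
    (n k ℓ C : ℕ) (hk0 : 0 < k) (hk : k ≤ n)
    (hratio : (k : ℝ) / n ≤ (ℓ : ℝ) / k)
    (ptol : ℝ) (hp0 : 0 < ptol)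
    (hC : (C : ℝ) ≤ Real.sqrt (2 * ptol) * Real.exp (k * ((ℓ : ℝ) / k - (k : ℝ) / n) ^ 2))
    (X : Fin C → Ω → Finset (Fin n))
    (hcard : ∀ i ω, (X i ω).card = k)
    (hunif : ∀ i (s : Finset (Fin n)), s.card = k →
      ℙ {ω | X i ω = s} = ((n.choose k : ENNReal))⁻¹)
    (hindep : ∀ (I : Finset (Fin C)) (s : Fin C → Finset (Fin n)),
      ℙ (⋂ i ∈ I, {ω | X i ω = s i}) = ∏ i ∈ I, ℙ {ω | X i ω = s i}) :
    (ℙ {ω | ∃ i j : Fin C, i < j ∧ ℓ ≤ ((X i ω) ∩ (X j ω)).card}).toReal ≤ ptol := by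
  set d := (ℓ : ℝ) / k - (k : ℝ) / n
  have hpair (i j : Fin C) (hij : i < j) :
      (ℙ : Measure Ω).real {ω | ℓ ≤ #(X i ω ∩ X j ω)} ≤ exp (-2 * k * d ^ 2) := by
    simpa using measureReal_le_card_inter_le ℙ (hcard i) (hcard j)
      (fun s t hs ht => by simp [measureReal_inter_eq_inv_choose_sq hunif hindep hij.ne hs ht])
      hk0 (by simpa using hk) (by simpa using hratio)
  have hchoose : ((C.choose 2 : ℕ) : ℝ) ≤ C ^ 2 / 2 := by
    rw [Nat.cast_choose_two]; gcongr; nlinarith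
  have hCsq : (C : ℝ) ^ 2 * exp (-2 * k * d ^ 2) ≤ 2 * ptol := by
    calc (C : ℝ) ^ 2 * exp (-2 * k * d ^ 2)
        ≤ (sqrt (2 * ptol) * exp (k * d ^ 2)) ^ 2 * exp (-2 * k * d ^ 2) := by gcongr
      _ = 2 * ptol := by
        rw [mul_pow, sq_sqrt (by positivity), ← exp_nat_mul, mul_assoc, ← exp_add,
          show ((2 : ℕ) : ℝ) * (k * d ^ 2) + -2 * k * d ^ 2 = 0 by push_cast; ring, exp_zero,
          mul_one]
  calc (ℙ {ω | ∃ i j : Fin C, i < j ∧ ℓ ≤ ((X i ω) ∩ (X j ω)).card}).toReal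
      ≤ C.choose 2 * exp (-2 * k * d ^ 2) := by
        simpa [measureReal_def] using
          measureReal_exists_lt_le ℙ (fun i j => {ω | ℓ ≤ #(X i ω ∩ X j ω)}) hpair
    _ ≤ ptol := by nlinarith [exp_pos (-2 * k * d ^ 2)]

/-- Capacity bound: if `C ≤ √(2 p_tol) · exp(k (ℓ/k − k/n)²)`, then `C` i.i.d. uniform
`k`-subsets of `{1,…,n}` have probability at most `p_tol` of some pairwise
intersection of size at least `ℓ`. -/
theorem stmt11 {Ω : Type*} [MeasureSpace Ω] [IsProbabilityMeasure (ℙ : Measure Ω)]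
    (n k ℓ C : ℕ) (hk0 : 0 < k) (hk : k ≤ n) (hℓ : ℓ ≤ k)
    (hratio : (k : ℝ) / n ≤ (ℓ : ℝ) / k)
    (ptol : ℝ) (hp0 : 0 < ptol) (hp1 : ptol ≤ 1) (hC0 : 1 ≤ C)
    (hC : (C : ℝ) ≤ Real.sqrt (2 * ptol) * Real.exp (k * ((ℓ : ℝ) / k - (k : ℝ) / n) ^ 2))
    (X : Fin C → Ω → Finset (Fin n))
    (hcard : ∀ i ω, (X i ω).card = k)
    (hunif : ∀ i (s : Finset (Fin n)), s.card = k →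
      ℙ {ω | X i ω = s} = ((n.choose k : ENNReal))⁻¹)
    (hindep : ∀ (I : Finset (Fin C)) (s : Fin C → Finset (Fin n)),
      ℙ (⋂ i ∈ I, {ω | X i ω = s i}) = ∏ i ∈ I, ℙ {ω | X i ω = s i}) :
    (ℙ {ω | ∃ i j : Fin C, i < j ∧ ℓ ≤ ((X i ω) ∩ (X j ω)).card}).toReal ≤ ptol :=
  stmt11_general n k ℓ C hk0 hk hratio ptol hp0 hC X hcard hunif hindep
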